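/- For every integer n ≥ 2, every integer m with 1 ≤ m ≤ n, and every real number x ≥ 1, one has Pₙ(x) > ∑_{ℓ=1}^{m} (1/ℓ!) · C(n+ℓ−1, 2ℓ−1) · x^ℓ, where C(·,·) denotes the binomial coefficient. -/

import Mathlib

/-- `σ₂(n) = ∑_{d ∣ n} d²`, the sum of the squares of the divisors of `n`. -/
def sigma2 (n : ℕ) : ℕ := ∑ d ∈ n.divisors, d ^ 2

/-- The polynomials `Pₙ`, defined by `P 0 = 1` and
`Pₙ(x) = (x/n) ∑_{k=1}^{n} σ₂(k) · P_{n−k}(x)` for `n ≥ 1`.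
They satisfy `Pₙ(1) = pp(n)`, the number of plane partitions of `n`. -/
noncomputable def P : ℕ → Polynomial ℝ
  | 0 => 1
  | n + 1 => Polynomial.C (((n : ℝ) + 1)⁻¹) * Polynomial.X *
      ∑ k ∈ Finset.range (n + 1), Polynomial.C ((sigma2 (k + 1) : ℝ)) * P (n - k)

/-! Since `σ₂(k) ≥ k²` and the recursion has nonnegative weights, induction on `n` shows that
each coefficient of `Pₙ` dominates the corresponding coefficient for the weights `k²`. Those
polynomials have generating function `exp (x q / (1 - q)²)`, so their coefficient of `x^ℓ` is
`C(n+ℓ-1, 2ℓ-1) / ℓ!`; the recursion identity behind this is an upper Chu–Vandermonde sum.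
For `n ≥ 2` the inequality is strict at `x¹` because `σ₂(n) > n²`, and evaluating at `x > 0` a
polynomial with nonnegative coefficients dominates any partial sum of its terms. -/

open Finset Polynomial

namespace Nat

theorem sum_range_choose_mul_choose_sub (a b N : ℕ) :
    ∑ k ∈ range (N + 1), k.choose a * (N - k).choose b = (N + 1).choose (a + b + 1) := by
  induction a generalizing N with
  | zero =>
    rw [zero_add, ← sum_Icc_choose, sum_subset (Icc_subset_Icc_left (zero_le b)),
      ← range_succ_eq_Icc_zero]
    · simpa using sum_range_reflect (fun k => k.choose b) (N + 1)
    · exact fun k _ hk => choose_eq_zero_of_lt (by simp_all)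
  | succ a ih =>
    induction N with
    | zero => simp [choose_eq_zero_of_lt]
    | succ N ihN =>
      have pascal (k : ℕ) : (k + 1).choose (a + 1) * (N - k).choose b
          = k.choose a * (N - k).choose b + k.choose (a + 1) * (N - k).choose b := by
        rw [choose_succ_succ, add_mul]
      rw [sum_range_succ', choose_zero_succ, zero_mul, add_zero]
      simp only [succ_sub_succ, pascal, sum_add_distrib, ih, ihN]
      rw [show a + 1 + b + 1 = a + b + 1 + 1 by ring, choose_succ_succ' (N + 1)]

theorem sq_eq_choose_one_add_two_mul_choose_two (k : ℕ) :
    k ^ 2 = k.choose 1 + 2 * k.choose 2 := by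
  induction k with
  | zero => simp
  | succ k ih => rw [choose_succ_succ k 1, choose_one_right, choose_one_right] at *; grind

theorem sum_range_sq_mul_choose_sub (N b : ℕ) :
    ∑ k ∈ range (N + 1), k ^ 2 * (N - k).choose b
      = (N + 1).choose (b + 2) + 2 * (N + 1).choose (b + 3) := by
  simp only [sq_eq_choose_one_add_two_mul_choose_two, add_mul, mul_assoc, sum_add_distrib,
    ← mul_sum, sum_range_choose_mul_choose_sub]
  ring_nf

theorem mul_sum_range_succ_sq_mul_choose (n j : ℕ) :
    (j + 2) * ∑ k ∈ range (n + 1), (k + 1) ^ 2 * (n - k + j).choose (2 * j + 1)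
      = (n + 1) * (n + j + 2).choose (2 * j + 3) := by
  have reindex : ∑ k ∈ range (n + 1), (k + 1) ^ 2 * (n - k + j).choose (2 * j + 1)
      = ∑ k ∈ range (n + j + 1 + 1), k ^ 2 * (n + j + 1 - k).choose (2 * j + 1) := by
    rw [eq_comm, sum_range_succ', zero_pow two_ne_zero, zero_mul, add_zero]
    refine (sum_subset_zero_on_sdiff (range_subset_range.mpr (by omega)) ?_ ?_).symm
    · intro k hk
      simp only [mem_sdiff, mem_range] at hk
      rw [choose_eq_zero_of_lt (by omega), mul_zero]
    · intro k hk
      simp only [mem_range] at hk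
      congr 2
      omega
  have pascal := choose_succ_right_eq (n + j + 2) (2 * j + 3)
  rw [reindex, sum_range_sq_mul_choose_sub]
  rcases le_or_gt (j + 1) n with h | h
  · obtain ⟨t, rfl⟩ : ∃ t, n = j + 1 + t := ⟨n - (j + 1), by omega⟩
    rw [show j + 1 + t + j + 2 - (2 * j + 3) = t by omega] at pascal
    linear_combination pascal
  · simp [choose_eq_zero_of_lt (show n + j + 2 < 2 * j + 3 by omega),
      choose_eq_zero_of_lt (show n + j + 2 < 2 * j + 4 by omega)]

end Nat

theorem Polynomial.sum_coeff_mul_pow_le_eval {R : Type*} [CommSemiring R] [PartialOrder R]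
    [IsOrderedRing R] {p : R[X]} (hp : ∀ i, 0 ≤ p.coeff i) {x : R} (hx : 0 ≤ x)
    (s : Finset ℕ) : ∑ i ∈ s, p.coeff i * x ^ i ≤ p.eval x := by
  have hterm (i : ℕ) : 0 ≤ p.coeff i * x ^ i := mul_nonneg (hp i) (pow_nonneg hx i)
  rw [eval_eq_sum, Polynomial.sum_def]
  calc ∑ i ∈ s, p.coeff i * x ^ i ≤ ∑ i ∈ s ∪ p.support, p.coeff i * x ^ i :=
        sum_le_sum_of_subset_of_nonneg subset_union_left fun i _ _ => hterm i
    _ = ∑ i ∈ p.support, p.coeff i * x ^ i :=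
        (sum_subset subset_union_right fun i _ hi => by simp [notMem_support_iff.mp hi]).symm

theorem sq_le_sigma2 (n : ℕ) : n ^ 2 ≤ sigma2 n := by
  rcases n.eq_zero_or_pos with rfl | hn
  · simp
  · exact single_le_sum (f := (· ^ 2)) (fun _ _ => Nat.zero_le _) (Nat.mem_divisors_self n hn.ne')

theorem sq_lt_sigma2 {n : ℕ} (hn : 1 < n) : n ^ 2 < sigma2 n := by
  have hsub : {1, n} ⊆ n.divisors := by
    simp [insert_subset_iff, (zero_lt_one.trans hn).ne']
  calc n ^ 2 < ∑ d ∈ {1, n}, d ^ 2 := by rw [sum_pair hn.ne]; omega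
    _ ≤ sigma2 n := sum_le_sum_of_subset hsub

theorem P_succ (n : ℕ) : P (n + 1) = C (((n : ℝ) + 1)⁻¹) * X *
    ∑ k ∈ range (n + 1), C ((sigma2 (k + 1) : ℝ)) * P (n - k) := by
  rw [P]

theorem coeff_P_succ_zero (n : ℕ) : (P (n + 1)).coeff 0 = 0 := by
  simp [P_succ, mul_assoc]

theorem coeff_P_succ_succ (n ℓ : ℕ) :
    (P (n + 1)).coeff (ℓ + 1) =
      ((n : ℝ) + 1)⁻¹ * ∑ k ∈ range (n + 1), (sigma2 (k + 1) : ℝ) * (P (n - k)).coeff ℓ := by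
  simp only [P_succ, mul_assoc, coeff_C_mul, coeff_X_mul, finsetSum_coeff]

theorem coeff_P_nonneg (n i : ℕ) : 0 ≤ (P n).coeff i := by
  induction n using Nat.strong_induction_on generalizing i with
  | _ n ih =>
    rcases n with _ | n
    · simp [P, coeff_one, apply_ite]
    rcases i with _ | i
    · rw [coeff_P_succ_zero]
    · rw [coeff_P_succ_succ]
      exact mul_nonneg (by positivity) (sum_nonneg fun k hk =>
        mul_nonneg (by positivity) (ih _ (by simp at hk; omega) i))

theorem coeff_P_succ_one (n : ℕ) :
    (P (n + 1)).coeff 1 = ((n : ℝ) + 1)⁻¹ * (sigma2 (n + 1) : ℝ) := by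
  rw [coeff_P_succ_succ, sum_eq_single_of_mem n (self_mem_range_succ n)]
  · simp [P]
  · intro k hk hkn
    obtain ⟨t, ht⟩ : ∃ t, n - k = t + 1 := ⟨n - k - 1, by simp at hk; omega⟩
    rw [ht, coeff_P_succ_zero, mul_zero]

/-- For `ℓ ≥ 1`, the coefficient of `x^ℓ qⁿ` in `exp (x q / (1 - q)²)`, the generating function
of `Pₙ` with `σ₂(k)` replaced by `k²`. -/
noncomputable def lowerCoeff (n ℓ : ℕ) : ℝ :=
  (1 / (Nat.factorial ℓ : ℝ)) * (Nat.choose (n + ℓ - 1) (2 * ℓ - 1) : ℝ)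

theorem lowerCoeff_nonneg (n ℓ : ℕ) : 0 ≤ lowerCoeff n ℓ := by
  unfold lowerCoeff; positivity

theorem lowerCoeff_zero_left {ℓ : ℕ} (hℓ : 1 ≤ ℓ) : lowerCoeff 0 ℓ = 0 := by
  simp [lowerCoeff, Nat.choose_eq_zero_of_lt (show ℓ - 1 < 2 * ℓ - 1 by omega)]

theorem lowerCoeff_one (n : ℕ) : lowerCoeff n 1 = n := by
  simp [lowerCoeff]

theorem lowerCoeff_succ_succ (n j : ℕ) :
    lowerCoeff (n + 1) (j + 2) =
      ((n : ℝ) + 1)⁻¹ * ∑ k ∈ range (n + 1), ((k : ℝ) + 1) ^ 2 * lowerCoeff (n - k) (j + 1) := by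
  have key : ((j : ℝ) + 2) *
        ∑ k ∈ range (n + 1), ((k : ℝ) + 1) ^ 2 * ((n - k + j).choose (2 * j + 1) : ℝ)
      = ((n : ℝ) + 1) * ((n + j + 2).choose (2 * j + 3) : ℝ) := by
    exact_mod_cast Nat.mul_sum_range_succ_sq_mul_choose n j
  simp only [lowerCoeff, show ∀ k, n - k + (j + 1) - 1 = n - k + j by omega,
    show n + 1 + (j + 2) - 1 = n + j + 2 by omega, show 2 * (j + 1) - 1 = 2 * j + 1 by omega,
    show 2 * (j + 2) - 1 = 2 * j + 3 by omega, one_div_mul_eq_div, mul_div_assoc', ← sum_div,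
    Nat.factorial_succ (j + 1)]
  push_cast
  field_simp
  linear_combination -key

theorem lowerCoeff_le_coeff_P (n : ℕ) {ℓ : ℕ} (hℓ : 1 ≤ ℓ) :
    lowerCoeff n ℓ ≤ (P n).coeff ℓ := by
  induction n using Nat.strong_induction_on generalizing ℓ with
  | _ n ih =>
    rcases n with _ | n
    · exact (lowerCoeff_zero_left hℓ).trans_le (coeff_P_nonneg 0 ℓ)
    obtain rfl | ⟨j, rfl⟩ : ℓ = 1 ∨ ∃ j, ℓ = j + 2 := by
      rcases ℓ with _ | _ | j <;> simp_all
    · have : ((n : ℝ) + 1) ^ 2 ≤ sigma2 (n + 1) := by exact_mod_cast sq_le_sigma2 (n + 1)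
      rw [coeff_P_succ_one, lowerCoeff_one, le_inv_mul_iff₀ (by positivity)]
      push_cast
      simpa [sq] using this
    · rw [coeff_P_succ_succ, lowerCoeff_succ_succ]
      gcongr with k hk
      · exact lowerCoeff_nonneg _ _
      · exact_mod_cast sq_le_sigma2 (k + 1)
      · exact ih _ (by simp at hk; omega) (by omega)

theorem lowerCoeff_one_lt_coeff_P {n : ℕ} (hn : 2 ≤ n) : lowerCoeff n 1 < (P n).coeff 1 := by
  obtain ⟨n, rfl⟩ : ∃ m, n = m + 1 := ⟨n - 1, by omega⟩
  have : ((n : ℝ) + 1) ^ 2 < sigma2 (n + 1) := by exact_mod_cast sq_lt_sigma2 (by omega)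
  rw [coeff_P_succ_one, lowerCoeff_one, lt_inv_mul_iff₀ (by positivity)]
  push_cast
  simpa [sq] using this

theorem P_lower_bound_general (n m : ℕ) (hn : 2 ≤ n) (x : ℝ) (hx : 1 ≤ x) :
    (P n).eval x >
      ∑ ℓ ∈ Finset.Icc 1 m,
        (1 / (Nat.factorial ℓ : ℝ)) * (Nat.choose (n + ℓ - 1) (2 * ℓ - 1) : ℝ) * x ^ ℓ := by
  have hx0 : 0 < x := zero_lt_one.trans_le hx
  calc ∑ ℓ ∈ Icc 1 m, lowerCoeff n ℓ * x ^ ℓ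
      ≤ ∑ ℓ ∈ Icc 1 (m + 1), lowerCoeff n ℓ * x ^ ℓ :=
        sum_le_sum_of_subset_of_nonneg (Icc_subset_Icc_right m.le_succ) fun ℓ _ _ =>
          mul_nonneg (lowerCoeff_nonneg n ℓ) (pow_nonneg hx0.le ℓ)
    _ < ∑ ℓ ∈ Icc 1 (m + 1), (P n).coeff ℓ * x ^ ℓ := by
        refine sum_lt_sum (fun ℓ hℓ => ?_) ⟨1, by simp, ?_⟩
        · gcongr
          exact lowerCoeff_le_coeff_P n (mem_Icc.mp hℓ).1
        · gcongr
          exact lowerCoeff_one_lt_coeff_P hn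
    _ ≤ (P n).eval x := sum_coeff_mul_pow_le_eval (coeff_P_nonneg n) hx0.le _

/-- For `n ≥ 2`, `1 ≤ m ≤ n`, and real `x ≥ 1`:
`P n` at `x` exceeds `∑_{ℓ=1}^{m} (1/ℓ!) · C(n+ℓ-1, 2ℓ-1) · x ^ ℓ`. -/
theorem P_lower_bound (n m : ℕ) (hn : 2 ≤ n) (hm1 : 1 ≤ m) (hmn : m ≤ n) (x : ℝ) (hx : 1 ≤ x) :
    (P n).eval x >
      ∑ ℓ ∈ Finset.Icc 1 m,
        (1 / (Nat.factorial ℓ : ℝ)) * (Nat.choose (n + ℓ - 1) (2 * ℓ - 1) : ℝ) * x ^ ℓ :=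
  P_lower_bound_general n m hn x hx
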